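/- arXiv:math/0609345 — 2 statements merged into one kernel-verified Lean document; each statement's English description precedes it below -/
import Mathlib

section
/- Let R be a commutative ring, and let f : M → N be a morphism of finitely generated projective R[t]-modules of the same constant rank n. If the induced map M/tM → N/tN (reduction modulo the ideal (t)) is an isomorphism, then f is injective. -/
/-!
Lifting the inverse of `M/tM ≅ N/tN` through the projective module `N` gives `g : N → M` with
`g ∘ f ≡ 1` modulo `tM`. Cayley–Hamilton for `1 - g ∘ f` produces `r ≡ 1 mod t` annihilating
`ker (g ∘ f) ⊇ ker f`. Such an `r` has constant coefficient `1`, hence is a non-zerodivisor of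
`R[t]` by McCoy's theorem, and so acts injectively on the flat module `M`.
-/

open Polynomial

lemma Polynomial.Monic.eval_one_sub_one_mem_of_coeff_mem_pow {A : Type*} [CommRing A]
    {I : Ideal A} {p : A[X]} (hp : p.Monic) (hcoeff : ∀ k, p.coeff k ∈ I ^ (p.natDegree - k)) : p.eval 1 - 1 ∈ I := by
  have hsum : p.eval 1 - 1 = ∑ k ∈ Finset.range p.natDegree, p.coeff k := by
    rw [eval_eq_sum_range, Finset.sum_range_succ, hp.coeff_natDegree]
    simp
  rw [hsum]
  refine Ideal.sum_mem _ fun k hk => Ideal.pow_le_self ?_ (hcoeff k)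
  have := Finset.mem_range.mp hk
  omega

/-- Cayley–Hamilton for `1 - h`, which acts as the identity on `ker h`. -/
lemma Module.End.exists_sub_one_mem_and_smul_ker_eq_zero {A M : Type*} [CommRing A]
    [AddCommGroup M] [Module A M] [Module.Finite A M] (I : Ideal A) (h : Module.End A M)
    (hh : ∀ x, x - h x ∈ I • (⊤ : Submodule A M)) :
    ∃ r : A, r - 1 ∈ I ∧ ∀ x, h x = 0 → r • x = 0 := by
  have hrange : LinearMap.range (1 - h) ≤ I • ⊤ := by
    rintro _ ⟨x, rfl⟩
    exact hh x
  obtain ⟨p, hp, -, hcoeff, hzero⟩ :=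
    LinearMap.exists_monic_and_natDegree_eq_and_coeff_mem_pow_and_aeval_eq_zero A (1 - h) I hrange
  refine ⟨p.eval 1, hp.eval_one_sub_one_mem_of_coeff_mem_pow hcoeff, fun x hx => ?_⟩
  rcases eq_or_ne x 0 with rfl | hx0
  · exact smul_zero _
  have heigen : (1 - h).HasEigenvector 1 x := by
    refine ⟨Module.End.mem_eigenspace_iff.mpr ?_, hx0⟩
    simp [hx]
  rw [← Module.End.aeval_apply_of_hasEigenvector heigen, hzero, LinearMap.zero_apply]

lemma Submodule.exists_sub_comp_mem_of_bijective_mapQ {A M N : Type*} [CommRing A]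
    [AddCommGroup M] [Module A M] [AddCommGroup N] [Module A N] [Module.Projective A N]
    (p : Submodule A M) (q : Submodule A N) (f : M →ₗ[A] N) (hf : p ≤ q.comap f)
    (hbij : Function.Bijective (p.mapQ q f hf)) : ∃ g : N →ₗ[A] M, ∀ x, x - g (f x) ∈ p := by
  let e := LinearEquiv.ofBijective (p.mapQ q f hf) hbij
  obtain ⟨g, hg⟩ := Module.projective_lifting_property p.mkQ (e.symm.toLinearMap ∘ₗ q.mkQ)
    p.mkQ_surjective
  refine ⟨g, fun x => (Submodule.Quotient.eq p).mp ?_⟩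
  have hgx := LinearMap.congr_fun hg (f x)
  simp only [LinearMap.comp_apply, Submodule.mkQ_apply, LinearEquiv.coe_coe] at hgx
  rw [hgx, LinearEquiv.eq_symm_apply]
  rfl

theorem injective_of_bijective_mod_X_general
    (R M N : Type) [CommRing R] [AddCommGroup M] [AddCommGroup N]
    [Module (Polynomial R) M] [Module (Polynomial R) N]
    [Module.Finite (Polynomial R) M]
    [Module.Projective (Polynomial R) M] [Module.Projective (Polynomial R) N]
    (f : M →ₗ[Polynomial R] N)
    (hle : (Ideal.span {Polynomial.X} : Ideal (Polynomial R)) • (⊤ : Submodule (Polynomial R) M) ≤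
      Submodule.comap f ((Ideal.span {Polynomial.X} : Ideal (Polynomial R)) •
        (⊤ : Submodule (Polynomial R) N)))
    (hbij : Function.Bijective
      (Submodule.mapQ
        ((Ideal.span {Polynomial.X} : Ideal (Polynomial R)) • (⊤ : Submodule (Polynomial R) M))
        ((Ideal.span {Polynomial.X} : Ideal (Polynomial R)) • (⊤ : Submodule (Polynomial R) N))
        f hle)) :
    Function.Injective f := by
  obtain ⟨g, hg⟩ := Submodule.exists_sub_comp_mem_of_bijective_mapQ _ _ f hle hbij
  obtain ⟨r, hr1, hr⟩ :=
    Module.End.exists_sub_one_mem_and_smul_ker_eq_zero (Ideal.span {X}) (g ∘ₗ f) hg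
  have hr0 : r.coeff 0 = 1 := by
    rw [Ideal.mem_span_singleton, X_dvd_iff, coeff_sub, coeff_one_zero, sub_eq_zero] at hr1
    exact hr1
  have hreg : IsSMulRegular M r := Module.Flat.isSMulRegular_of_nonZeroDivisors
    (mem_nonzeroDivisors_of_coeff_mem 0 (by simp [hr0, one_mem]))
  refine (injective_iff_map_eq_zero f).mpr fun x hx => hreg.right_eq_zero_of_smul ?_
  exact hr x (by simp [hx])

/-- Let `R` be a commutative ring and `f : M → N` a morphism of finitely generated
projective `R[t]`-modules of the same constant rank `n` (all localizations at primes
are free of rank `n`).  If the induced map `M/tM → N/tN` is an isomorphism, then `f`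
is injective. -/
theorem injective_of_bijective_mod_X
    (R M N : Type) [CommRing R] [AddCommGroup M] [AddCommGroup N]
    [Module (Polynomial R) M] [Module (Polynomial R) N]
    [Module.Finite (Polynomial R) M] [Module.Finite (Polynomial R) N]
    [Module.Projective (Polynomial R) M] [Module.Projective (Polynomial R) N]
    (n : ℕ)
    (hrkM : ∀ p : PrimeSpectrum (Polynomial R),
      Module.finrank (Localization.AtPrime p.asIdeal)
        (LocalizedModule p.asIdeal.primeCompl M) = n)
    (hrkN : ∀ p : PrimeSpectrum (Polynomial R),
      Module.finrank (Localization.AtPrime p.asIdeal)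
        (LocalizedModule p.asIdeal.primeCompl N) = n)
    (f : M →ₗ[Polynomial R] N)
    (hle : (Ideal.span {Polynomial.X} : Ideal (Polynomial R)) • (⊤ : Submodule (Polynomial R) M) ≤
      Submodule.comap f ((Ideal.span {Polynomial.X} : Ideal (Polynomial R)) •
        (⊤ : Submodule (Polynomial R) N)))
    (hbij : Function.Bijective
      (Submodule.mapQ
        ((Ideal.span {Polynomial.X} : Ideal (Polynomial R)) • (⊤ : Submodule (Polynomial R) M))
        ((Ideal.span {Polynomial.X} : Ideal (Polynomial R)) • (⊤ : Submodule (Polynomial R) N))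
        f hle)) :
    Function.Injective f :=
  injective_of_bijective_mod_X_general R M N f hle hbij
end

section
/- Let J₁ ⊇ ... ⊇ Jₙ and J̄₁ ⊇ ... ⊇ J̄ₙ be chains of nonzero ideals of F_q[t] such that the products J₁⋯Jₙ and J̄₁⋯J̄ₙ are coprime. For a lattice N ⊆ F_q(t)^{⊕n} (a finitely generated F_q[t]-submodule of rank n), the number of sublattices N'' ⊆ N with N/N'' ≅ ⊕ᵢ F_q[t]/(Jᵢ·J̄ᵢ) equals the sum over sublattices N' ⊆ N with N/N' ≅ ⊕ᵢ F_q[t]/Jᵢ of the number of sublattices N'' ⊆ N' with N'/N'' ≅ ⊕ᵢ F_q[t]/J̄ᵢ; i.e., the Hecke operators satisfy T(J₁,...,Jₙ)·T(J̄₁,...,J̄ₙ) = T(J₁J̄₁,...,JₙJ̄ₙ) when the supports are disjoint. -/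
/-!
Put `P = ⊕ᵢ F_q[t]/Jᵢ` and `Q = ⊕ᵢ F_q[t]/J̄ᵢ`. By the Chinese remainder theorem
`⊕ᵢ F_q[t]/(JᵢJ̄ᵢ) ≅ P × Q`, and `P`, `Q` are killed by the coprime ideals `a = ∏ Jᵢ`,
`b = ∏ J̄ᵢ`. Write `1 = α + β` with `α ∈ a`, `β ∈ b`. For a chain `N'' ⊆ N' ⊆ N` with
`N/N' ≅ P` and `N'/N'' ≅ Q` we have `aN ⊆ N'` and `bN' ⊆ N''`, so `N' = N'' + aN` is
determined by `N''`, and `n ↦ (n mod N', αn mod N'')` identifies `N/N''` with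
`N/N' × N'/N''`. Conversely, if `N/N'' ≅ P × Q` then the preimage of `0 × Q` is such an `N'`.
Hence `N'' ↦ (N'' + aN, N'')` is a bijection onto the pairs counted on the right, and all
the sets involved are finite because `N` is finitely generated and `P`, `Q` are finite.
-/

open Polynomial

theorem Module.Finite.finite_linearMap {R M P : Type*} [CommRing R] [AddCommGroup M]
    [Module R M] [AddCommGroup P] [Module R P] [Module.Finite R M] [Finite P] :
    Finite (M →ₗ[R] P) := by
  obtain ⟨s, hs⟩ := Module.Finite.fg_top (R := R) (M := M)
  refine _root_.Finite.of_injective (fun (f : M →ₗ[R] P) (x : (s : Set M)) => f x)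
    fun f g h => ?_
  exact LinearMap.ext_on hs fun x hx => congr_fun h ⟨x, hx⟩

namespace Submodule

variable {R : Type*} [CommRing R] {V : Type*} [AddCommGroup V] [Module R V]
  {P Q : Type*} [AddCommGroup P] [Module R P] [AddCommGroup Q] [Module R Q]

def ofCotype (N : Submodule R V) (P : Type*) [AddCommGroup P] [Module R P] :
    Set (Submodule R V) :=
  {X | X ≤ N ∧ Nonempty ((N ⧸ X.comap N.subtype) ≃ₗ[R] P)}

variable {N X Y : Submodule R V}

theorem ofCotype_congr (N : Submodule R V) (e : P ≃ₗ[R] Q) : N.ofCotype P = N.ofCotype Q := by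
  ext X
  exact and_congr_right fun _ => ⟨fun ⟨f⟩ => ⟨f.trans e⟩, fun ⟨f⟩ => ⟨f.trans e.symm⟩⟩

theorem annihilator_smul_le_of_mem_ofCotype (hX : X ∈ N.ofCotype P) :
    Module.annihilator R P • N ≤ X := by
  obtain ⟨-, ⟨e⟩⟩ := hX
  refine smul_le.2 fun r hr n hn => ?_
  have h := Module.mem_annihilator.1 (e.annihilator_eq ▸ hr) (Quotient.mk ⟨n, hn⟩)
  rwa [← Quotient.mk_smul, Quotient.mk_eq_zero] at h

theorem sup_smul_eq_of_smul_le {a b : Ideal R} (hab : a ⊔ b = ⊤) (hYN : Y ≤ N) (hXY : X ≤ Y)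
    (haY : a • N ≤ Y) (hbX : b • Y ≤ X) : X ⊔ a • N = Y := by
  refine le_antisymm (sup_le hXY haY) ?_
  calc Y = (a ⊔ b) • Y := by rw [hab, Submodule.top_smul]
    _ = a • Y ⊔ b • Y := sup_smul _ _ _
    _ ≤ X ⊔ a • N := sup_le (le_sup_of_le_right (smul_mono_right _ hYN)) (le_sup_of_le_left hbX)

theorem nonempty_quotientEquivProd_of_smul_le {a b : Ideal R} (hab : a ⊔ b = ⊤) (hYN : Y ≤ N)
    (hXY : X ≤ Y) (haY : a • N ≤ Y) (hbX : b • Y ≤ X) :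
    Nonempty ((N ⧸ X.comap N.subtype) ≃ₗ[R]
      (N ⧸ Y.comap N.subtype) × (Y ⧸ X.comap Y.subtype)) := by
  obtain ⟨α, hα, β, hβ, hαβ⟩ := mem_sup.1 (hab ▸ mem_top : (1 : R) ∈ a ⊔ b)
  have hβ' : β = 1 - α := eq_sub_of_add_eq' hαβ
  have hαY : ∀ n ∈ N, α • n ∈ Y := fun n hn => haY (smul_mem_smul hα hn)
  have hβX : ∀ y ∈ Y, β • y ∈ X := fun y hy => hbX (smul_mem_smul hβ hy)
  let φ : N →ₗ[R] (N ⧸ Y.comap N.subtype) × (Y ⧸ X.comap Y.subtype) :=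
    (Y.comap N.subtype).mkQ.prod
      ((X.comap Y.subtype).mkQ ∘ₗ (α • N.subtype).codRestrict Y fun n => hαY n n.2)
  have hker : LinearMap.ker φ = X.comap N.subtype := by
    ext n
    simp only [φ, LinearMap.ker_prod, ker_mkQ, mem_inf, mem_comap, subtype_apply,
      LinearMap.mem_ker, LinearMap.coe_comp, Function.comp_apply, mkQ_apply, Quotient.mk_eq_zero]
    constructor
    · rintro ⟨hnY, hαn⟩
      have hn : (n : V) = α • (n : V) + β • (n : V) := by rw [← add_smul, hαβ, one_smul]
      rw [hn]
      exact X.add_mem hαn (hβX _ hnY)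
    · exact fun hnX => ⟨hXY hnX, X.smul_mem α hnX⟩
  have hsurj : Function.Surjective φ := by
    rintro ⟨u, v⟩
    obtain ⟨m, rfl⟩ := Quotient.mk_surjective _ u
    obtain ⟨y, rfl⟩ := Quotient.mk_surjective _ v
    refine ⟨β • m + ⟨y, hYN y.2⟩, Prod.ext ((Quotient.eq _).2 ?_) ((Quotient.eq _).2 ?_)⟩
    · show β • (m : V) + y - m ∈ Y
      rw [show β • (m : V) + y - m = y - α • m by rw [hβ']; module]
      exact Y.sub_mem y.2 (hαY m m.2)
    · show α • (β • (m : V) + y) - y ∈ X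
      rw [show α • (β • (m : V) + y) - y = β • (α • (m : V)) - β • (y : V) by rw [hβ']; module]
      exact X.sub_mem (hβX _ (hαY m m.2)) (hβX y y.2)
  exact ⟨(quotEquivOfEq _ _ hker.symm).trans (φ.quotKerEquivOfSurjective hsurj)⟩

theorem exists_mem_ofCotype_of_mem_ofCotype_prod (hX : X ∈ N.ofCotype (P × Q)) :
    ∃ Y ∈ N.ofCotype P, X ∈ Y.ofCotype Q := by
  obtain ⟨hXN, ⟨e⟩⟩ := hX
  let f : N →ₗ[R] P := LinearMap.fst R P Q ∘ₗ e.toLinearMap ∘ₗ (X.comap N.subtype).mkQ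
  have hf : Function.Surjective f :=
    Prod.fst_surjective.comp (e.surjective.comp (mkQ_surjective _))
  let Y := (LinearMap.ker f).map N.subtype
  have hYN : Y ≤ N := map_subtype_le _ _
  have hY : Y.comap N.subtype = LinearMap.ker f := comap_map_eq_of_injective N.injective_subtype _
  let g : Y →ₗ[R] Q :=
    LinearMap.snd R P Q ∘ₗ e.toLinearMap ∘ₗ (X.comap N.subtype).mkQ ∘ₗ inclusion hYN
  have hg_ker : LinearMap.ker g = X.comap Y.subtype := by
    ext y
    have hfy : f (inclusion hYN y) = 0 := by rw [← LinearMap.mem_ker, ← hY]; exact y.2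
    calc g y = 0 ↔ e (Quotient.mk (inclusion hYN y)) = 0 :=
          ⟨fun h => Prod.ext hfy h, fun h => congrArg Prod.snd h⟩
      _ ↔ y ∈ X.comap Y.subtype := by rw [e.map_eq_zero_iff, Quotient.mk_eq_zero]; rfl
  have hg : Function.Surjective g := by
    intro q
    obtain ⟨m, hm⟩ := mkQ_surjective _ (e.symm (0, q))
    have hmY : (m : V) ∈ Y := ⟨m, by simp [f, hm], rfl⟩
    refine ⟨⟨m, hmY⟩, ?_⟩
    show (e ((X.comap N.subtype).mkQ m)).2 = q
    rw [hm, e.apply_symm_apply]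
  have hXY : X ≤ Y := fun x hx => ⟨⟨x, hXN hx⟩, by
    show (e (Quotient.mk _)).1 = 0
    rw [(Quotient.mk_eq_zero _).2 (show ⟨x, hXN hx⟩ ∈ X.comap N.subtype from hx), map_zero,
      Prod.fst_zero], rfl⟩
  exact ⟨Y, ⟨hYN, ⟨(quotEquivOfEq _ _ hY).trans (f.quotKerEquivOfSurjective hf)⟩⟩,
    hXY, ⟨(quotEquivOfEq _ _ hg_ker.symm).trans (g.quotKerEquivOfSurjective hg)⟩⟩

theorem eq_sup_of_mem_ofCotype (hPQ : Module.annihilator R P ⊔ Module.annihilator R Q = ⊤)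
    (hY : Y ∈ N.ofCotype P) (hX : X ∈ Y.ofCotype Q) :
    Y = X ⊔ Module.annihilator R P • N :=
  (sup_smul_eq_of_smul_le hPQ hY.1 hX.1 (annihilator_smul_le_of_mem_ofCotype hY)
    (annihilator_smul_le_of_mem_ofCotype hX)).symm

theorem mem_ofCotype_prod_of_mem_ofCotype
    (hPQ : Module.annihilator R P ⊔ Module.annihilator R Q = ⊤)
    (hY : Y ∈ N.ofCotype P) (hX : X ∈ Y.ofCotype Q) : X ∈ N.ofCotype (P × Q) := by
  obtain ⟨e⟩ := nonempty_quotientEquivProd_of_smul_le hPQ hY.1 hX.1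
    (annihilator_smul_le_of_mem_ofCotype hY) (annihilator_smul_le_of_mem_ofCotype hX)
  exact ⟨hX.1.trans hY.1, ⟨e.trans (hY.2.some.prodCongr hX.2.some)⟩⟩

theorem sup_mem_ofCotype_of_mem_ofCotype_prod
    (hPQ : Module.annihilator R P ⊔ Module.annihilator R Q = ⊤) (hX : X ∈ N.ofCotype (P × Q)) :
    X ⊔ Module.annihilator R P • N ∈ N.ofCotype P ∧
      X ∈ (X ⊔ Module.annihilator R P • N).ofCotype Q := by
  obtain ⟨Y, hY, hXY⟩ := exists_mem_ofCotype_of_mem_ofCotype_prod hX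
  rw [← eq_sup_of_mem_ofCotype hPQ hY hXY]
  exact ⟨hY, hXY⟩

def ofCotypeProdEquivSigma (hPQ : Module.annihilator R P ⊔ Module.annihilator R Q = ⊤)
    (N : Submodule R V) :
    N.ofCotype (P × Q) ≃ Σ Y : N.ofCotype P, (Y : Submodule R V).ofCotype Q where
  toFun X := ⟨⟨_, (sup_mem_ofCotype_of_mem_ofCotype_prod hPQ X.2).1⟩,
    ⟨X, (sup_mem_ofCotype_of_mem_ofCotype_prod hPQ X.2).2⟩⟩
  invFun p := ⟨p.2, mem_ofCotype_prod_of_mem_ofCotype hPQ p.1.2 p.2.2⟩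
  left_inv _ := rfl
  right_inv := by
    rintro ⟨⟨Y, hY⟩, ⟨X, hX⟩⟩
    obtain rfl := eq_sup_of_mem_ofCotype hPQ hY hX
    rfl

theorem finite_ofCotype (N : Submodule R V) [Module.Finite R N] [Finite P] :
    Finite (N.ofCotype P) := by
  have := Module.Finite.finite_linearMap (R := R) (M := N) (P := P)
  refine Finite.of_injective
    (fun X : N.ofCotype P => X.2.2.some.toLinearMap ∘ₗ (X.1.comap N.subtype).mkQ) ?_
  intro X X' h
  have hker : X.1.comap N.subtype = X'.1.comap N.subtype := by
    simpa only [LinearEquiv.ker_comp, ker_mkQ] using congrArg LinearMap.ker h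
  apply Subtype.ext
  simpa only [map_comap_subtype, inf_eq_right.2 X.2.1, inf_eq_right.2 X'.2.1] using
    congrArg (map N.subtype) hker

theorem card_ofCotype_prod [IsNoetherianRing R] (N : Submodule R V) [Module.Finite R N]
    [Finite P] [Finite Q] (hPQ : Module.annihilator R P ⊔ Module.annihilator R Q = ⊤) :
    Nat.card (N.ofCotype (P × Q)) =
      ∑ᶠ Y : N.ofCotype P, Nat.card ((Y : Submodule R V).ofCotype Q) := by
  have (Y : N.ofCotype P) : Finite ((Y : Submodule R V).ofCotype Q) :=
    have := Module.Finite.of_injective (inclusion Y.2.1) (inclusion_injective _)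
    finite_ofCotype _
  have := finite_ofCotype (P := P) N
  have := Fintype.ofFinite (N.ofCotype P)
  rw [Nat.card_congr (ofCotypeProdEquivSigma hPQ N), Nat.card_sigma, finsum_eq_sum_of_fintype]

end Submodule

instance Polynomial.hasFiniteQuotients {F : Type*} [Field F] [Finite F] :
    Ring.HasFiniteQuotients F[X] where
  finiteQuotient {I} hI := by
    obtain ⟨f, hfI, hf⟩ := Submodule.exists_mem_ne_zero_of_ne_bot hI
    have := (AdjoinRoot.powerBasis hf).finite
    have : Finite (AdjoinRoot f) := Module.finite_of_finite F
    exact Finite.of_surjective (α := AdjoinRoot f) _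
      (Ideal.Quotient.factor_surjective ((Ideal.span_singleton_le_iff_mem _).2 hfI))

namespace Ideal

variable {R : Type*} [CommRing R] {ι : Type*}

theorem annihilator_pi_quotient (K : ι → Ideal R) :
    Module.annihilator R (Π i, R ⧸ K i) = ⨅ i, K i := by
  simp only [Module.annihilator_pi, Ideal.annihilator_quotient]

noncomputable def piQuotientMulEquivProd (K L : ι → Ideal R) (h : ∀ i, IsCoprime (K i) (L i)) :
    (Π i, R ⧸ (K i * L i)) ≃ₗ[R] (Π i, R ⧸ K i) × (Π i, R ⧸ L i) :=
  (LinearEquiv.piCongrRight fun i =>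
      (AlgEquiv.ofRingEquiv (f := quotientMulEquivQuotientProd _ _ (h i))
        fun _ => rfl).toLinearEquiv).trans
    { Equiv.arrowProdEquivProdArrow _ _ _ with map_add' _ _ := rfl, map_smul' _ _ := rfl }

end Ideal

theorem hecke_multiplicativity_coprime_general
    (Fq : Type) [Field Fq] [Fintype Fq] (n : ℕ)
    (J Jb : Fin n → Ideal (Polynomial Fq))
    (hJne : ∀ i, J i ≠ ⊥) (hJbne : ∀ i, Jb i ≠ ⊥)
    (hcop : (∏ i, J i) ⊔ (∏ i, Jb i) = ⊤)
    (N : Submodule (Polynomial Fq) (Fin n → RatFunc Fq))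
    (hfg : Module.Finite (Polynomial Fq) N) :
    Nat.card {N'' : Submodule (Polynomial Fq) (Fin n → RatFunc Fq) //
        N'' ≤ N ∧ Nonempty ((N ⧸ N''.comap N.subtype) ≃ₗ[Polynomial Fq]
          ((i : Fin n) → Polynomial Fq ⧸ (J i * Jb i)))} =
      ∑ᶠ N' : {N' : Submodule (Polynomial Fq) (Fin n → RatFunc Fq) //
          N' ≤ N ∧ Nonempty ((N ⧸ N'.comap N.subtype) ≃ₗ[Polynomial Fq]
            ((i : Fin n) → Polynomial Fq ⧸ J i))},
        Nat.card {N'' : Submodule (Polynomial Fq) (Fin n → RatFunc Fq) //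
          N'' ≤ N'.1 ∧ Nonempty ((N'.1 ⧸ N''.comap N'.1.subtype) ≃ₗ[Polynomial Fq]
            ((i : Fin n) → Polynomial Fq ⧸ Jb i))} := by
  have (i : Fin n) : Finite (Fq[X] ⧸ J i) := Ring.HasFiniteQuotients.finiteQuotient (hJne i)
  have (i : Fin n) : Finite (Fq[X] ⧸ Jb i) := Ring.HasFiniteQuotients.finiteQuotient (hJbne i)
  have hinf : (⨅ i, J i) ⊔ (⨅ i, Jb i) = ⊤ := eq_top_iff.2 <| hcop ▸ sup_le_sup
    (Ideal.prod_le_inf.trans (Finset.inf_univ_eq_iInf _).le)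
    (Ideal.prod_le_inf.trans (Finset.inf_univ_eq_iInf _).le)
  have hcop' (i : Fin n) : IsCoprime (J i) (Jb i) := Ideal.isCoprime_iff_sup_eq.2 <|
    eq_top_iff.2 <| hinf ▸ sup_le_sup (iInf_le J i) (iInf_le Jb i)
  show Nat.card (N.ofCotype _) = ∑ᶠ N' : N.ofCotype _, Nat.card (N'.1.ofCotype _)
  rw [N.ofCotype_congr (Ideal.piQuotientMulEquivProd J Jb hcop')]
  exact N.card_ofCotype_prod (by rwa [Ideal.annihilator_pi_quotient, Ideal.annihilator_pi_quotient])

/-- Multiplicativity of Hecke operators for coprime levels: if `J₁ ⊇ ... ⊇ Jₙ` and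
`J̄₁ ⊇ ... ⊇ J̄ₙ` are chains of nonzero ideals of `F_q[t]` with coprime products, then
for a lattice `N ⊆ F_q(t)^{⊕n}`, the number of sublattices `N'' ⊆ N` with
`N/N'' ≅ ⊕ᵢ F_q[t]/(Jᵢ J̄ᵢ)` equals the sum, over sublattices `N' ⊆ N` with
`N/N' ≅ ⊕ᵢ F_q[t]/Jᵢ`, of the number of sublattices `N'' ⊆ N'` with
`N'/N'' ≅ ⊕ᵢ F_q[t]/J̄ᵢ`; i.e. `T(J₁,...,Jₙ) · T(J̄₁,...,J̄ₙ) = T(J₁J̄₁,...,JₙJ̄ₙ)`. -/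
theorem hecke_multiplicativity_coprime
    (Fq : Type) [Field Fq] [Fintype Fq] (n : ℕ)
    (J Jb : Fin n → Ideal (Polynomial Fq))
    (hJchain : ∀ i j : Fin n, i ≤ j → J j ≤ J i)
    (hJbchain : ∀ i j : Fin n, i ≤ j → Jb j ≤ Jb i)
    (hJne : ∀ i, J i ≠ ⊥) (hJbne : ∀ i, Jb i ≠ ⊥)
    (hcop : (∏ i, J i) ⊔ (∏ i, Jb i) = ⊤)
    (N : Submodule (Polynomial Fq) (Fin n → RatFunc Fq))
    (hfg : Module.Finite (Polynomial Fq) N)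
    (hfull : Submodule.span (RatFunc Fq) (N : Set (Fin n → RatFunc Fq)) = ⊤) :
    Nat.card {N'' : Submodule (Polynomial Fq) (Fin n → RatFunc Fq) //
        N'' ≤ N ∧ Nonempty ((N ⧸ N''.comap N.subtype) ≃ₗ[Polynomial Fq]
          ((i : Fin n) → Polynomial Fq ⧸ (J i * Jb i)))} =
      ∑ᶠ N' : {N' : Submodule (Polynomial Fq) (Fin n → RatFunc Fq) //
          N' ≤ N ∧ Nonempty ((N ⧸ N'.comap N.subtype) ≃ₗ[Polynomial Fq]
            ((i : Fin n) → Polynomial Fq ⧸ J i))},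
        Nat.card {N'' : Submodule (Polynomial Fq) (Fin n → RatFunc Fq) //
          N'' ≤ N'.1 ∧ Nonempty ((N'.1 ⧸ N''.comap N'.1.subtype) ≃ₗ[Polynomial Fq]
            ((i : Fin n) → Polynomial Fq ⧸ Jb i))} :=
  hecke_multiplicativity_coprime_general Fq n J Jb hJne hJbne hcop N hfg
end
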